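/- arXiv:1201.3941 — 5 statements merged into one kernel-verified Lean document; each statement's English description precedes it below -/
import Mathlib

section
/- For every a ≥ 1 and b ≥ 0 one has a·b ≤ H(a) + H*(b), where H(a) = (1/4)·a·(log a)^2 and H*(b) = (1/2)·e^{-1+√(1+4b)}·(-1+√(1+4b)). -/
/-!
Substituting `a = exp t` and `s = -1 + √(1 + 4b)`, so that `4b = s² + 2s`, the inequality becomes
`exp t (s² + 2s - t²) ≤ 2 s exp s`. Since `s² - t² ≤ 2s² - 2st` (the gap is `(s - t)²`), it suffices that
`exp t (1 + s - t) ≤ exp s`, which is `1 + x ≤ exp x` at `x = s - t`.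
-/

open Real

lemma exp_mul_one_add_sub_le_exp (t s : ℝ) : exp t * (1 + (s - t)) ≤ exp s :=
  calc exp t * (1 + (s - t)) ≤ exp t * exp (s - t) :=
        mul_le_mul_of_nonneg_left (by linarith [add_one_le_exp (s - t)]) (exp_pos t).le
    _ = exp s := by rw [← exp_add, add_sub_cancel]

lemma exp_mul_le_of_sq_add_two_mul_eq (t : ℝ) {s b : ℝ} (hs : 0 ≤ s) (hsb : s ^ 2 + 2 * s = 4 * b) :
    exp t * b ≤ 1 / 4 * exp t * t ^ 2 + 1 / 2 * exp s * s := by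
  have hshift : 2 * s * (exp t * (1 + (s - t))) ≤ 2 * s * exp s :=
    mul_le_mul_of_nonneg_left (exp_mul_one_add_sub_le_exp t s) (by positivity)
  have hb : exp t * b = exp t * (s ^ 2 + 2 * s) / 4 := by rw [hsb]; ring
  linarith [mul_nonneg (exp_pos t).le (sq_nonneg (s - t))]

lemma sq_add_two_mul_neg_one_add_sqrt {b : ℝ} (hb : -1 / 4 ≤ b) :
    (-1 + √(1 + 4 * b)) ^ 2 + 2 * (-1 + √(1 + 4 * b)) = 4 * b := by
  linear_combination sq_sqrt (by linarith : (0 : ℝ) ≤ 1 + 4 * b)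

/-- For every `a ≥ 1` and `b ≥ 0`,
`a·b ≤ H(a) + H*(b)` where `H(a) = (1/4)a(log a)²` and
`H*(b) = (1/2)e^{-1+√(1+4b)}(-1+√(1+4b))`. -/
theorem stmt3 (a b : ℝ) (ha : 1 ≤ a) (hb : 0 ≤ b) :
    a * b ≤ (1 / 4) * a * (Real.log a) ^ 2
      + (1 / 2) * Real.exp (-1 + Real.sqrt (1 + 4 * b))
        * (-1 + Real.sqrt (1 + 4 * b)) := by
  have hs : 0 ≤ -1 + √(1 + 4 * b) := by
    linarith [one_le_sqrt.mpr (by linarith : (1 : ℝ) ≤ 1 + 4 * b)]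
  have h := exp_mul_le_of_sq_add_two_mul_eq (log a) hs
    (sq_add_two_mul_neg_one_add_sqrt (by linarith))
  rwa [exp_log (by linarith)] at h
end

section
/- If u ≤ 0 solves the structure equation with t ≥ ε > 0 on a closed hyperbolic surface, then ∫_Σ ‖q‖^2 e^{-2u} dA ≤ A/(8ε^2), where A is the area of Σ. -/
open MeasureTheory

/-!
Integrating the structure equation over the closed surface kills `∫ Δu`, leaving
`2A = 2∫ e^u + 16 t² ∫ ‖q‖² e^{-2u}`. Dropping the nonnegative term `∫ e^u` and using
`ε² ≤ t²` gives the bound.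
-/

theorem mul_integral_le_of_integral_eq_zero {S : Type*} [MeasurableSpace S] {μ : Measure S}
    [IsFiniteMeasure μ] {Δ f g : S → ℝ} {a b : ℝ} (hf : Integrable f μ) (hg : Integrable g μ)
    (hf0 : ∀ x, 0 ≤ f x) (hΔ : ∀ x, Δ x = f x + b * g x - a) (hΔint : ∫ x, Δ x ∂μ = 0) :
    b * ∫ x, g x ∂μ ≤ a * μ.real Set.univ := by
  have hsplit : ∫ x, Δ x ∂μ = ∫ x, f x ∂μ + b * ∫ x, g x ∂μ - a * μ.real Set.univ := by
    simp_rw [hΔ]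
    have hfg : Integrable (fun x => f x + b * g x) μ := hf.add (hg.const_mul b)
    rw [integral_sub hfg (integrable_const a),
      integral_add hf (hg.const_mul b), integral_const_mul, integral_const, smul_eq_mul,
      mul_comm a]
  linarith [integral_nonneg (μ := μ) (f := f) hf0]

/-- Closedness of the surface is encoded by `∫ Δu = 0`. -/
theorem stmt6_general
    (S : Type*) [MeasurableSpace S] (μ : Measure S) [IsFiniteMeasure μ]
    (u Δu q2 : S → ℝ) (t ε : ℝ) (hε : 0 < ε) (htε : ε ≤ t)
    (hq2 : ∀ x, 0 ≤ q2 x)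
    (hΔint : ∫ x, Δu x ∂μ = 0)
    (h1 : Integrable (fun x => Real.exp (u x)) μ)
    (h2 : Integrable (fun x => q2 x * Real.exp (-2 * u x)) μ)
    (heq : ∀ x, Δu x + 2 - 2 * Real.exp (u x)
      - 16 * t ^ 2 * q2 x * Real.exp (-2 * u x) = 0) :
    ∫ x, q2 x * Real.exp (-2 * u x) ∂μ ≤ (μ Set.univ).toReal / (8 * ε ^ 2) := by
  have hI : 0 ≤ ∫ x, q2 x * Real.exp (-2 * u x) ∂μ :=
    integral_nonneg fun x => mul_nonneg (hq2 x) (Real.exp_pos _).le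
  have hbound : 16 * t ^ 2 * ∫ x, q2 x * Real.exp (-2 * u x) ∂μ ≤ 2 * μ.real Set.univ :=
    mul_integral_le_of_integral_eq_zero (h1.const_mul 2) h2
      (fun x => by positivity) (fun x => by linarith [heq x]) hΔint
  have hεt : ε ^ 2 ≤ t ^ 2 := pow_le_pow_left₀ hε.le htε 2
  rw [le_div_iff₀ (by positivity), ← measureReal_def]
  nlinarith

/-- If `u ≤ 0` solves the structure equation with `t ≥ ε > 0` on a
closed hyperbolic surface of area `A`, then `∫ ‖q‖² e^{-2u} ≤ A/(8ε²)`.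
Closedness is encoded by `∫ Δu = 0`. -/
theorem stmt6
    (S : Type*) [MeasurableSpace S] (μ : Measure S) [IsFiniteMeasure μ]
    (u Δu q2 : S → ℝ) (t ε : ℝ) (hε : 0 < ε) (htε : ε ≤ t)
    (hq2 : ∀ x, 0 ≤ q2 x)
    (hu0 : ∀ x, u x ≤ 0)
    (hΔu : Integrable Δu μ)
    (hΔint : ∫ x, Δu x ∂μ = 0)
    (h1 : Integrable (fun x => Real.exp (u x)) μ)
    (h2 : Integrable (fun x => q2 x * Real.exp (-2 * u x)) μ)
    (heq : ∀ x, Δu x + 2 - 2 * Real.exp (u x)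
      - 16 * t ^ 2 * q2 x * Real.exp (-2 * u x) = 0) :
    ∫ x, q2 x * Real.exp (-2 * u x) ∂μ ≤ (μ Set.univ).toReal / (8 * ε ^ 2) :=
  stmt6_general S μ u Δu q2 t ε hε htε hq2 hΔint h1 h2 heq
end

section
/- Define f₁(s) = 2 - 2e^s and f₂(s) = s - e^{-2s} for s ≤ 0, extended smoothly so that f₁(s) < 0 for s > 0, f₂(s) ≤ min{0, s} for all s, and f₁(s) = -θ s^{θ-1}, f₂(s) = 0 for s > 1 (θ > 2). Then for any bounded nonnegative function V, a C^2 function u on a closed surface solves Δu + 2 - 2e^u - V e^{-2u} = 0 if and only if it solves -Δu + V u - f₁(u) - V f₂(u) = 0. -/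
/-!
At a maximum point of `u` we have `Δu ≤ 0`, and with `V ≥ 0` the sign conditions on `f₁, f₂`
make either equation impossible where `u > 0`; so every solution of either equation satisfies
`u ≤ 0`, and on `u ≤ 0` the two left-hand sides are negatives of each other.
-/

open Real

theorem le_of_forall_isMax_imp_le {X : Type*} [TopologicalSpace X] [CompactSpace X]
    {u : X → ℝ} (hu : Continuous u) {c : ℝ} (h : ∀ x, (∀ y, u y ≤ u x) → u x ≤ c) (y : X) :
    u y ≤ c := by
  obtain ⟨x, hx⟩ := hu.exists_forall_ge' y (by simp)
  exact (hx y).trans (h x hx)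

theorem liouville_lhs_neg {d v s : ℝ} (hd : d ≤ 0) (hv : 0 ≤ v) (hs : 0 < s) :
    d + 2 - 2 * exp s - v * exp (-2 * s) < 0 := by
  have : 1 < exp s := one_lt_exp_iff.2 hs
  nlinarith [mul_nonneg hv (exp_pos (-2 * s)).le]

theorem modified_lhs_pos {d v s a b : ℝ} (hd : d ≤ 0) (hv : 0 ≤ v) (ha : a < 0) (hb : b ≤ s) :
    0 < -d + v * s - a - v * b := by
  nlinarith [mul_le_mul_of_nonneg_left hb hv]

theorem stmt10_general
    (S : Type*) [TopologicalSpace S] [CompactSpace S]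
    (u Δu V : S → ℝ)
    (hu : Continuous u)
    (hV : ∀ x, 0 ≤ V x)
    (hmax : ∀ x, (∀ y, u y ≤ u x) → Δu x ≤ 0)
    (f₁ f₂ : ℝ → ℝ)
    (hf₁neg : ∀ s : ℝ, s ≤ 0 → f₁ s = 2 - 2 * Real.exp s)
    (hf₁pos : ∀ s : ℝ, 0 < s → f₁ s < 0)
    (hf₂neg : ∀ s : ℝ, s ≤ 0 → f₂ s = s - Real.exp (-2 * s))
    (hf₂ : ∀ s : ℝ, f₂ s ≤ min 0 s) :
    (∀ x, Δu x + 2 - 2 * Real.exp (u x) - V x * Real.exp (-2 * u x) = 0)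
      ↔ (∀ x, -Δu x + V x * u x - f₁ (u x) - V x * f₂ (u x) = 0) := by
  have equiv_of_nonpos : ∀ x, u x ≤ 0 →
      (Δu x + 2 - 2 * exp (u x) - V x * exp (-2 * u x) = 0 ↔
        -Δu x + V x * u x - f₁ (u x) - V x * f₂ (u x) = 0) := by
    intro x hx
    rw [hf₁neg _ hx, hf₂neg _ hx]
    constructor <;> intro h <;> linarith
  constructor
  · intro h x
    have hle := le_of_forall_isMax_imp_le hu fun x hx => not_lt.1 fun hpos =>
      (liouville_lhs_neg (hmax x hx) (hV x) hpos).ne (h x)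
    exact (equiv_of_nonpos x (hle x)).1 (h x)
  · intro h x
    have hle := le_of_forall_isMax_imp_le hu fun x hx => not_lt.1 fun hpos =>
      (modified_lhs_pos (hmax x hx) (hV x) (hf₁pos _ hpos) ((hf₂ _).trans (min_le_right _ _))).ne'
        (h x)
    exact (equiv_of_nonpos x (hle x)).2 (h x)

/-- With `f₁(s) = 2 - 2e^s` and `f₂(s) = s - e^{-2s}` for `s ≤ 0`,
extended so that `f₁(s) < 0` for `s > 0` and `f₂(s) ≤ min{0,s}` for all `s`
(e.g. `f₁(s) = -θs^{θ-1}`, `f₂(s) = 0` for `s > 1`, `θ > 2`), a C² function `u` on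
a closed surface solves `Δu + 2 - 2e^u - Ve^{-2u} = 0` iff it solves
`-Δu + Vu - f₁(u) - Vf₂(u) = 0`, for any bounded nonnegative `V`.
The closed surface is a compact nonempty topological space and the maximum
principle for `Δ` is assumed. -/
theorem stmt10
    (S : Type*) [TopologicalSpace S] [CompactSpace S] [Nonempty S]
    (u Δu V : S → ℝ)
    (hu : Continuous u)
    (hV : ∀ x, 0 ≤ V x) (M : ℝ) (hVb : ∀ x, V x ≤ M)
    (hmax : ∀ x, (∀ y, u y ≤ u x) → Δu x ≤ 0)
    (f₁ f₂ : ℝ → ℝ)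
    (hf₁neg : ∀ s : ℝ, s ≤ 0 → f₁ s = 2 - 2 * Real.exp s)
    (hf₁pos : ∀ s : ℝ, 0 < s → f₁ s < 0)
    (hf₂neg : ∀ s : ℝ, s ≤ 0 → f₂ s = s - Real.exp (-2 * s))
    (hf₂ : ∀ s : ℝ, f₂ s ≤ min 0 s) :
    (∀ x, Δu x + 2 - 2 * Real.exp (u x) - V x * Real.exp (-2 * u x) = 0)
      ↔ (∀ x, -Δu x + V x * u x - f₁ (u x) - V x * f₂ (u x) = 0) :=
  stmt10_general S u Δu V hu hV hmax f₁ f₂ hf₁neg hf₁pos hf₂neg hf₂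
end

section
/- With notation as above, the second derivative ü = ∂²u/∂t² at t = 0 satisfies (Δ - 2)ü = 32‖q‖², i.e. ü = -16·D(‖q‖²) where D = -2(Δ-2)^{-1}. Consequently, the second derivative at t = 0 of the area functional 𝒜(t) = -∫_Σ e^{u(t)} dA equals 16∫_Σ ‖q‖² dA. -/
/-!
Differentiating the structure equation
`Δu + 2 - 2 e^u - 16 t² ‖q‖² e^{-2u} = 0` twice in `t` and evaluating at `t = 0`, where
`u = u̇ = 0`, every term except `Δü - 2ü - 32‖q‖²` vanishes. Integrating this identity over the
closed surface kills `Δü`, so `∫ ü = -16 ∫ ‖q‖²`, and `𝒜''(0) = -∫ ü` because `u = u̇ = 0`.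
-/

open MeasureTheory

theorem HasDerivAt.eq_zero_of_forall_eq_zero {f : ℝ → ℝ} {f' t : ℝ} (hf : HasDerivAt f f' t)
    (h : ∀ s, f s = 0) : f' = 0 := by
  have hf0 : f = fun _ => 0 := funext h
  subst hf0
  exact hf.unique (hasDerivAt_const t 0)

section StructureEquation

variable {u du Δu dΔu : ℝ → ℝ} {q : ℝ}

theorem structure_eq_first_deriv
    (hderiv : ∀ t, HasDerivAt u (du t) t) (hΔderiv : ∀ t, HasDerivAt Δu (dΔu t) t)
    (heq : ∀ t, Δu t + 2 - 2 * Real.exp (u t) - 16 * t ^ 2 * q * Real.exp (-2 * u t) = 0)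
    (t : ℝ) :
    dΔu t - 2 * Real.exp (u t) * du t - 32 * t * q * Real.exp (-2 * u t)
      + 32 * t ^ 2 * q * Real.exp (-2 * u t) * du t = 0 := by
  have hexp : HasDerivAt (fun τ => Real.exp (u τ)) (Real.exp (u t) * du t) t :=
    (hderiv t).exp
  have hexp2 : HasDerivAt (fun τ => Real.exp (-2 * u τ))
      (Real.exp (-2 * u t) * (-2 * du t)) t :=
    ((hderiv t).const_mul (-2)).exp
  have h := ((((hΔderiv t).add_const 2).sub (hexp.const_mul 2)).sub
    ((((hasDerivAt_pow 2 t).const_mul 16).mul_const q).mul hexp2)).eq_zero_of_forall_eq_zero heq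
  push_cast at h
  linear_combination h

theorem structure_eq_second_deriv_at_zero {w Δw : ℝ} (hu0 : u 0 = 0) (hdu0 : du 0 = 0)
    (hderiv : HasDerivAt u (du 0) 0) (hderiv2 : HasDerivAt du w 0)
    (hΔderiv2 : HasDerivAt dΔu Δw 0)
    (hfirst : ∀ t, dΔu t - 2 * Real.exp (u t) * du t - 32 * t * q * Real.exp (-2 * u t)
      + 32 * t ^ 2 * q * Real.exp (-2 * u t) * du t = 0) :
    Δw - 2 * w = 32 * q := by
  have hexp : HasDerivAt (fun t => Real.exp (u t)) (Real.exp (u 0) * du 0) 0 := hderiv.exp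
  have hexp2 : HasDerivAt (fun t => Real.exp (-2 * u t))
      (Real.exp (-2 * u 0) * (-2 * du 0)) 0 :=
    (hderiv.const_mul (-2)).exp
  have h := ((((hΔderiv2.sub ((hexp.const_mul 2).mul hderiv2)).sub
    ((((hasDerivAt_id (0 : ℝ)).const_mul 32).mul_const q).mul hexp2)).add
    (((((hasDerivAt_pow 2 (0 : ℝ)).const_mul 32).mul_const q).mul hexp2).mul hderiv2))
    ).eq_zero_of_forall_eq_zero hfirst
  simp only [Pi.mul_apply, hu0, hdu0, mul_zero, Real.exp_zero] at h
  linear_combination h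

end StructureEquation

theorem integral_eq_of_laplacian_sub_eq {S : Type*} [MeasurableSpace S] {μ : Measure S}
    {w Δw q : S → ℝ} (hΔw : Integrable Δw μ) (hq : Integrable q μ)
    (hΔint : ∫ x, Δw x ∂μ = 0) (h : ∀ x, Δw x - 2 * w x = 32 * q x) :
    ∫ x, w x ∂μ = -16 * ∫ x, q x ∂μ := by
  have hw : w = fun x => Δw x / 2 - 16 * q x := funext fun x => by linarith [h x]
  rw [hw, integral_sub (hΔw.div_const 2) (hq.const_mul 16), integral_div, integral_const_mul,
    hΔint]
  ring

theorem stmt15_general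
    (S : Type*) [MeasurableSpace S] (μ : Measure S)
    (u du Δu dΔu : ℝ → S → ℝ) (w2 Δw2 q2 : S → ℝ) (Acc : ℝ)
    (hu0 : ∀ x, u 0 x = 0)
    (hdu0 : ∀ x, du 0 x = 0)
    (hderiv : ∀ t x, HasDerivAt (fun τ => u τ x) (du t x) t)
    (hderiv2 : ∀ x, HasDerivAt (fun t => du t x) (w2 x) 0)
    (hΔderiv : ∀ t x, HasDerivAt (fun τ => Δu τ x) (dΔu t x) t)
    (hΔderiv2 : ∀ x, HasDerivAt (fun t => dΔu t x) (Δw2 x) 0)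
    (hΔw2 : Integrable Δw2 μ) (hq2i : Integrable q2 μ)
    (hΔint : ∫ x, Δw2 x ∂μ = 0)
    (hAcc : Acc = -∫ x, (w2 x + (du 0 x) ^ 2) * Real.exp (u 0 x) ∂μ)
    (heq : ∀ t x, Δu t x + 2 - 2 * Real.exp (u t x)
      - 16 * t ^ 2 * q2 x * Real.exp (-2 * u t x) = 0) :
    (∀ x, Δw2 x - 2 * w2 x = 32 * q2 x) ∧ Acc = 16 * ∫ x, q2 x ∂μ := by
  have hsecond : ∀ x, Δw2 x - 2 * w2 x = 32 * q2 x := fun x =>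
    structure_eq_second_deriv_at_zero (hu0 x) (hdu0 x) (hderiv 0 x) (hderiv2 x) (hΔderiv2 x)
      (structure_eq_first_deriv (hderiv · x) (hΔderiv · x) (heq · x))
  have hAcc' : Acc = -∫ x, w2 x ∂μ := by
    simp only [hAcc, hu0, hdu0, Real.exp_zero, mul_one]
    norm_num
  refine ⟨hsecond, ?_⟩
  rw [hAcc', integral_eq_of_laplacian_sub_eq hΔw2 hq2i hΔint hsecond]
  ring

/-- For a smooth family `γ(t) = (u(t), t)` of solutions of the
structure equation with `u(0) = 0` and `u̇(0) = 0`, the second derivative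
`ü = ∂²u/∂t²|_{t=0}` satisfies `(Δ - 2)ü = 32‖q‖²`; consequently the area
functional `𝒜(t) = -∫ e^{u(t)} dA` satisfies `𝒜''(0) = 16∫‖q‖² dA`.
Here `du t = ∂u/∂t`, `w2 = ü(0)`, `dΔu t = ∂(Δu)/∂t`, `Δw2 = Δü(0)` (commuting
`Δ` with `∂/∂t`), `∫ Δw2 = 0` encodes closedness, and
`Acc = 𝒜''(0) = -∫(ü + u̇²)e^{u(0)}` is the second derivative of the area. -/
theorem stmt15
    (S : Type*) [MeasurableSpace S] (μ : Measure S) [IsFiniteMeasure μ]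
    (u du Δu dΔu : ℝ → S → ℝ) (w2 Δw2 q2 : S → ℝ) (Acc : ℝ)
    (hq2 : ∀ x, 0 ≤ q2 x)
    (hu0 : ∀ x, u 0 x = 0)
    (hdu0 : ∀ x, du 0 x = 0)
    (hderiv : ∀ t x, HasDerivAt (fun τ => u τ x) (du t x) t)
    (hderiv2 : ∀ x, HasDerivAt (fun t => du t x) (w2 x) 0)
    (hΔderiv : ∀ t x, HasDerivAt (fun τ => Δu τ x) (dΔu t x) t)
    (hΔderiv2 : ∀ x, HasDerivAt (fun t => dΔu t x) (Δw2 x) 0)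
    (hw2 : Integrable w2 μ) (hΔw2 : Integrable Δw2 μ) (hq2i : Integrable q2 μ)
    (hΔint : ∫ x, Δw2 x ∂μ = 0)
    (hAcc : Acc = -∫ x, (w2 x + (du 0 x) ^ 2) * Real.exp (u 0 x) ∂μ)
    (heq : ∀ t x, Δu t x + 2 - 2 * Real.exp (u t x)
      - 16 * t ^ 2 * q2 x * Real.exp (-2 * u t x) = 0) :
    (∀ x, Δw2 x - 2 * w2 x = 32 * q2 x) ∧ Acc = 16 * ∫ x, q2 x ∂μ :=
  stmt15_general S μ u du Δu dΔu w2 Δw2 q2 Acc hu0 hdu0 hderiv hderiv2 hΔderiv hΔderiv2 hΔw2 hq2i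
    hΔint hAcc heq
end

section
/- Suppose u ≤ 0 satisfies ∫_Σ(2u + 2e^u(u² - u) - 16t²‖q‖²e^{-2u}(2u² + u)) ≥ 0 and ‖u‖_{L^p} ≤ C₃ for p = 1, 2. Then ∫_Σ 16t²‖q‖²e^{-2u}u² ≤ C₄ for a constant C₄ depending only on C₃ and the area of Σ. -/
open MeasureTheory

/-!
Write `f = 16t²‖q‖²e^{-2u} ≥ 0`. For `u ≤ 0` one has `e^u(u² - u) ≤ u² - u`, so the
`f`-free part of the integrand is at most `2u²`, and `(u + 1/2)² ≥ 0` gives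
`-f u ≤ f u² + f/4`. Hence the hypothesis `0 ≤ ∫(2u + 2e^u(u² - u) - f(2u² + u))` yields
`∫ f u² ≤ 2‖u‖²_{L²} + (1/4)∫ f ≤ 2C₃² + |Σ|/2`.
-/

lemma two_mul_add_two_mul_exp_mul_sq_sub_le {u : ℝ} (hu : u ≤ 0) :
    2 * u + 2 * Real.exp u * (u ^ 2 - u) ≤ 2 * u ^ 2 := by
  have hexp : Real.exp u ≤ 1 := Real.exp_le_one_iff.2 hu
  have hsq : 0 ≤ u ^ 2 - u := by nlinarith [sq_nonneg u]
  nlinarith [mul_le_mul_of_nonneg_right hexp hsq]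

lemma neg_mul_le_mul_sq_add_div_four {f u : ℝ} (hf : 0 ≤ f) :
    -(f * u) ≤ f * u ^ 2 + f / 4 := by
  nlinarith [mul_nonneg hf (sq_nonneg (u + 1 / 2))]

section Absorption

variable {S : Type*} [MeasurableSpace S] {μ : Measure S}

lemma integral_mul_sq_le_of_integral_sub_nonneg {G f u : S → ℝ} (hf : ∀ x, 0 ≤ f x)
    (hG : Integrable G μ) (hfi : Integrable f μ) (hfu : Integrable (fun x => f x * u x) μ)
    (hfu2 : Integrable (fun x => f x * u x ^ 2) μ)
    (h : 0 ≤ ∫ x, (G x - f x * (2 * u x ^ 2 + u x)) ∂μ) :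
    ∫ x, f x * u x ^ 2 ∂μ ≤ ∫ x, G x ∂μ + (∫ x, f x ∂μ) / 4 := by
  have hmono : ∫ x, (G x - f x * (2 * u x ^ 2 + u x)) ∂μ
      ≤ ∫ x, (G x - f x * u x ^ 2 + f x / 4) ∂μ := by
    refine integral_mono ?_ ((hG.sub hfu2).add (hfi.div_const 4)) fun x => ?_
    · exact hG.sub (((hfu2.const_mul 2).add hfu).congr (ae_of_all _ fun x => by
        simp only [Pi.add_apply]; ring))
    · nlinarith [neg_mul_le_mul_sq_add_div_four (u := u x) (hf x)]
  have hGfu2 : Integrable (fun x => G x - f x * u x ^ 2) μ := hG.sub hfu2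
  rw [integral_add hGfu2 (hfi.div_const 4), integral_sub hG hfu2, integral_div] at hmono
  linarith

lemma integral_two_mul_add_two_mul_exp_le {u : S → ℝ} (hu : ∀ x, u x ≤ 0)
    (hG : Integrable (fun x => 2 * u x + 2 * Real.exp (u x) * (u x ^ 2 - u x)) μ)
    (hu2 : Integrable (fun x => u x ^ 2) μ) :
    ∫ x, (2 * u x + 2 * Real.exp (u x) * (u x ^ 2 - u x)) ∂μ ≤ 2 * ∫ x, u x ^ 2 ∂μ := by
  rw [← integral_const_mul]
  exact integral_mono hG (hu2.const_mul 2) fun x => two_mul_add_two_mul_exp_mul_sq_sub_le (hu x)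

end Absorption

theorem stmt18_general
    (S : Type*) [MeasurableSpace S] (μ : Measure S)
    (C₃ : ℝ) :
    ∃ C₄ : ℝ, ∀ (u q2 : S → ℝ) (t : ℝ),
      (∀ x, 0 ≤ q2 x) →
      (∀ x, u x ≤ 0) →
      Integrable u μ →
      Integrable (fun x => (u x) ^ 2) μ →
      Integrable (fun x => (u x) ^ 2 * Real.exp (u x)) μ →
      Integrable (fun x => u x * Real.exp (u x)) μ →
      Integrable (fun x => q2 x * Real.exp (-2 * u x)) μ →
      Integrable (fun x => q2 x * u x * Real.exp (-2 * u x)) μ →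
      Integrable (fun x => q2 x * (u x) ^ 2 * Real.exp (-2 * u x)) μ →
      (∫ x, |u x| ∂μ ≤ C₃) →
      (∫ x, (u x) ^ 2 ∂μ ≤ C₃ ^ 2) →
      (∫ x, 16 * t ^ 2 * q2 x * Real.exp (-2 * u x) ∂μ
        ≤ 2 * (μ Set.univ).toReal) →
      (0 ≤ ∫ x, (2 * u x + 2 * Real.exp (u x) * ((u x) ^ 2 - u x)
          - 16 * t ^ 2 * q2 x * Real.exp (-2 * u x) * (2 * (u x) ^ 2 + u x)) ∂μ) →
      ∫ x, 16 * t ^ 2 * q2 x * Real.exp (-2 * u x) * (u x) ^ 2 ∂μ ≤ C₄ := by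
  refine ⟨2 * C₃ ^ 2 + (μ Set.univ).toReal / 2, ?_⟩
  intro u q2 t hq hu hiu hiu2 hiu2e hiue hiq hiqu hiqu2 _ hL2 hI0 hpos
  have hG : Integrable (fun x => 2 * u x + 2 * Real.exp (u x) * (u x ^ 2 - u x)) μ :=
    ((hiu.const_mul 2).add ((hiu2e.sub hiue).const_mul 2)).congr
      (ae_of_all _ fun x => by simp only [Pi.add_apply, Pi.sub_apply]; ring)
  have hf : Integrable (fun x => 16 * t ^ 2 * q2 x * Real.exp (-2 * u x)) μ :=
    (hiq.const_mul (16 * t ^ 2)).congr (ae_of_all _ fun x => by ring)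
  have hfu : Integrable (fun x => 16 * t ^ 2 * q2 x * Real.exp (-2 * u x) * u x) μ :=
    (hiqu.const_mul (16 * t ^ 2)).congr (ae_of_all _ fun x => by ring)
  have hfu2 : Integrable (fun x => 16 * t ^ 2 * q2 x * Real.exp (-2 * u x) * u x ^ 2) μ :=
    (hiqu2.const_mul (16 * t ^ 2)).congr (ae_of_all _ fun x => by ring)
  have habsorb := integral_mul_sq_le_of_integral_sub_nonneg
    (fun x => by have := hq x; positivity) hG hf hfu hfu2 hpos
  linarith [integral_two_mul_add_two_mul_exp_le hu hG hiu2]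

/-- If `u ≤ 0` satisfies
`∫(2u + 2e^u(u² - u) - 16t²‖q‖²e^{-2u}(2u² + u)) ≥ 0` together with the `L^p`
bounds `‖u‖_{L¹} ≤ C₃`, `‖u‖_{L²} ≤ C₃` (and the a priori bound
`∫16t²‖q‖²e^{-2u} ≤ 2A` coming from the integrated structure equation), then
`∫ 16t²‖q‖²e^{-2u}u² ≤ C₄` for a constant `C₄` depending only on `C₃` and the
area of `Σ`. -/
theorem stmt18
    (S : Type*) [MeasurableSpace S] (μ : Measure S) [IsFiniteMeasure μ]
    (C₃ : ℝ) :
    ∃ C₄ : ℝ, ∀ (u q2 : S → ℝ) (t : ℝ),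
      (∀ x, 0 ≤ q2 x) →
      (∀ x, u x ≤ 0) →
      Integrable u μ →
      Integrable (fun x => (u x) ^ 2) μ →
      Integrable (fun x => (u x) ^ 2 * Real.exp (u x)) μ →
      Integrable (fun x => u x * Real.exp (u x)) μ →
      Integrable (fun x => q2 x * Real.exp (-2 * u x)) μ →
      Integrable (fun x => q2 x * u x * Real.exp (-2 * u x)) μ →
      Integrable (fun x => q2 x * (u x) ^ 2 * Real.exp (-2 * u x)) μ →
      (∫ x, |u x| ∂μ ≤ C₃) →
      (∫ x, (u x) ^ 2 ∂μ ≤ C₃ ^ 2) →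
      (∫ x, 16 * t ^ 2 * q2 x * Real.exp (-2 * u x) ∂μ
        ≤ 2 * (μ Set.univ).toReal) →
      (0 ≤ ∫ x, (2 * u x + 2 * Real.exp (u x) * ((u x) ^ 2 - u x)
          - 16 * t ^ 2 * q2 x * Real.exp (-2 * u x) * (2 * (u x) ^ 2 + u x)) ∂μ) →
      ∫ x, 16 * t ^ 2 * q2 x * Real.exp (-2 * u x) * (u x) ^ 2 ∂μ ≤ C₄ :=
  stmt18_general S μ C₃
end
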